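/- Let Σ₀ = {α, S₀, ϑ₁, ϑ₂} be an admissible quadruple such that the pair (α, ϑ₁) is controllable (i.e., Σ₀ is strongly admissible). Then: (i) every eigenvalue of α has strictly positive imaginary part, so in particular α is invertible; (ii) with Λ_k = [(I_n + iα⁻¹)^kϑ₁, (I_n − iα⁻¹)^kϑ₂] and S_{k+1} = S_k + α⁻¹S_kα^{−*} + α⁻¹Λ_k j Λ_k* α^{−*}, the matrix S_k is positive definite for every k ∈ ℕ₀, so each quadruple Σ_k = {α, S_k, (I_n + iα⁻¹)^kϑ₁, (I_n − iα⁻¹)^kϑ₂} is admissible; and (iii) the pair (α, (I_n + iα⁻¹)^kϑ₁) is controllable for every k ∈ ℕ₀. -/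

import Mathlib

open Matrix
open scoped ComplexOrder

/-- The `m×m` signature matrix `j = diag(I_{m₁}, −I_{m₂})`. -/
noncomputable def sigJ (m₁ m₂ : ℕ) : Matrix (Fin m₁ ⊕ Fin m₂) (Fin m₁ ⊕ Fin m₂) ℂ :=
  Matrix.fromBlocks 1 0 0 (-1)

/-- A quadruple `{α, S₀, ϑ₁, ϑ₂}` is admissible if `S₀` is Hermitian positive definite and
`αS₀ − S₀α* = i(ϑ₁ϑ₁* + ϑ₂ϑ₂*)`. -/
def Admissible {n m₁ m₂ : ℕ} (α S₀ : Matrix (Fin n) (Fin n) ℂ)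
    (θ₁ : Matrix (Fin n) (Fin m₁) ℂ) (θ₂ : Matrix (Fin n) (Fin m₂) ℂ) : Prop :=
  S₀.PosDef ∧ α * S₀ - S₀ * αᴴ = Complex.I • (θ₁ * θ₁ᴴ + θ₂ * θ₂ᴴ)

/-- A pair `(α, θ)` is controllable if the columns of `θ, αθ, …, α^{n−1}θ` span `ℂⁿ`. -/
def Controllable {n p : ℕ} (α : Matrix (Fin n) (Fin n) ℂ) (θ : Matrix (Fin n) (Fin p) ℂ) :
    Prop :=
  Submodule.span ℂ
    {v : Fin n → ℂ | ∃ k : ℕ, k < n ∧ ∃ j : Fin p, v = fun i => (α ^ k * θ) i j} = ⊤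

/-!
Pairing `αS - Sα* = i(ϑ₁ϑ₁* + ϑ₂ϑ₂*)` with an eigenvector `v` of `α*` for the eigenvalue `z̄`
gives `2 Im z ⟨Sv, v⟩ = |ϑ₁*v|² + |ϑ₂*v|²`, and controllability of `(α, ϑ₁)` forbids `ϑ₁*v = 0`;
hence `σ(α)` lies in the open upper half-plane. In particular `-i ∉ σ(α)`, so
`1 + iα⁻¹ = α⁻¹(α + i)` is invertible; it commutes with `α`, so it preserves controllability.

For the evolution step, the admissibility identity gives
`S_{k+1} = (1 - iα⁻¹) S_k (1 - iα⁻¹)* + 2 α⁻¹ϑϑ*α^{-*}` with `ϑ = (1 + iα⁻¹)^k ϑ₁`.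
A vector annihilated by both `(1 - iα⁻¹)*` and `(α⁻¹ϑ)*` is an eigenvector of `α*` annihilated
by `ϑ*`, which controllability of `(α, ϑ)` excludes; so `S_{k+1}` is positive definite.
The admissibility identity for `Σ_{k+1}` is a direct computation from the one for `Σ_k`.
-/

namespace Matrix

variable {ι : Type*} [Fintype ι]

lemma exists_conjTranspose_mulVec_eq_smul_of_mem_spectrum [DecidableEq ι] {A : Matrix ι ι ℂ}
    {z : ℂ} (hz : z ∈ spectrum ℂ A) : ∃ v ≠ 0, Aᴴ *ᵥ v = star z • v := by
  have hz' : star z ∈ spectrum ℂ Aᴴ := by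
    rw [spectrum.mem_iff, ← isUnit_star, star_sub, ← algebraMap_star_comm, star_star]
    simpa [star_eq_conjTranspose, spectrum.mem_iff] using hz
  rw [← spectrum_toLin', ← Module.End.hasEigenvalue_iff_mem_spectrum] at hz'
  obtain ⟨v, hv⟩ := hz'.exists_hasEigenvector
  exact ⟨v, hv.2, by simpa using hv.apply_eq_smul⟩

lemma star_dotProduct_mul_conjTranspose_mulVec {κ : Type*} [Fintype κ] (B : Matrix ι κ ℂ)
    (v : ι → ℂ) : star v ⬝ᵥ (B * Bᴴ) *ᵥ v = star (Bᴴ *ᵥ v) ⬝ᵥ Bᴴ *ᵥ v := by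
  rw [← mulVec_mulVec, dotProduct_mulVec, star_mulVec, conjTranspose_conjTranspose]

lemma isUnit_of_forall_mem_spectrum_im_pos [DecidableEq ι] {A : Matrix ι ι ℂ}
    (h : ∀ z ∈ spectrum ℂ A, 0 < z.im) : IsUnit A := by
  by_contra hA
  simpa using h 0 (spectrum.zero_mem_iff ℂ |>.mpr hA)

lemma isUnit_one_add_I_smul_inv [DecidableEq ι] {A : Matrix ι ι ℂ}
    (h : ∀ z ∈ spectrum ℂ A, 0 < z.im) : IsUnit (1 + Complex.I • A⁻¹) := by
  have hA := isUnit_of_forall_mem_spectrum_im_pos h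
  have hI : IsUnit (algebraMap ℂ (Matrix ι ι ℂ) (-Complex.I) - A) := by
    by_contra hI
    have := h _ hI
    norm_num at this
  have : 1 + Complex.I • A⁻¹ = -(A⁻¹ * (algebraMap ℂ (Matrix ι ι ℂ) (-Complex.I) - A)) := by
    rw [mul_sub, Algebra.algebraMap_eq_smul_one, mul_smul_comm, mul_one,
      nonsing_inv_mul _ ((isUnit_iff_isUnit_det A).mp hA)]
    module
  rw [this]
  exact (isUnit_nonsing_inv_iff.mpr hA |>.mul hI).neg

lemma PosDef.mul_mul_conjTranspose_add_smul {μ κ : Type*} [Fintype μ] [Fintype κ]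
    {S : Matrix ι ι ℂ} (hS : S.PosDef) (C : Matrix μ ι ℂ) (B : Matrix μ κ ℂ) {c : ℂ}
    (hc : 0 < c) (hker : ∀ x, Cᴴ *ᵥ x = 0 → Bᴴ *ᵥ x = 0 → x = 0) :
    (C * S * Cᴴ + c • (B * Bᴴ)).PosDef := by
  refine .of_dotProduct_mulVec_pos ((hS.posSemidef.mul_mul_conjTranspose_same C).add
    ((posSemidef_self_mul_conjTranspose B).smul hc.le)).isHermitian fun x hx => ?_
  have hquad : star x ⬝ᵥ (C * S * Cᴴ + c • (B * Bᴴ)) *ᵥ x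
      = star (Cᴴ *ᵥ x) ⬝ᵥ S *ᵥ (Cᴴ *ᵥ x) + c * (star (Bᴴ *ᵥ x) ⬝ᵥ Bᴴ *ᵥ x) := by
    rw [add_mulVec, dotProduct_add, smul_mulVec, dotProduct_smul,
      star_dotProduct_mul_conjTranspose_mulVec, ← mulVec_mulVec, ← mulVec_mulVec,
      dotProduct_mulVec, smul_eq_mul]
    simp only [star_mulVec, conjTranspose_conjTranspose]
  rw [hquad]
  by_cases hCx : Cᴴ *ᵥ x = 0
  · rw [hCx, mulVec_zero, dotProduct_zero, zero_add]
    exact mul_pos hc (dotProduct_star_self_pos_iff.mpr fun hBx => hx (hker x hCx hBx))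
  · exact add_pos_of_pos_of_nonneg (hS.dotProduct_mulVec_pos hCx)
      (mul_nonneg hc.le (dotProduct_star_self_nonneg _))

end Matrix

section Evolution

variable {ι κ₁ κ₂ : Type*} [Fintype ι] [DecidableEq ι] [Fintype κ₁] [Fintype κ₂]
  {α S T : Matrix ι ι ℂ} {θa : Matrix ι κ₁ ℂ} {θb : Matrix ι κ₂ ℂ}

/-- The map `S_k ↦ S_{k+1}`, with `Λ_k j Λ_k*` written out as `θa θa* - θb θb*`. -/
noncomputable def evolutionStep (α S : Matrix ι ι ℂ) (θa : Matrix ι κ₁ ℂ)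
    (θb : Matrix ι κ₂ ℂ) : Matrix ι ι ℂ :=
  S + α⁻¹ * S * α⁻¹ᴴ + α⁻¹ * (θa * θaᴴ - θb * θbᴴ) * α⁻¹ᴴ

lemma mul_conjTranspose_inv_sub_inv_mul (hα : IsUnit α)
    (h : α * S - S * αᴴ = Complex.I • T) :
    S * α⁻¹ᴴ - α⁻¹ * S = Complex.I • (α⁻¹ * T * α⁻¹ᴴ) := by
  have hα' : IsUnit α.det := (isUnit_iff_isUnit_det α).mp hα
  have hH : αᴴ * α⁻¹ᴴ = 1 := by rw [← conjTranspose_mul, nonsing_inv_mul _ hα', conjTranspose_one]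
  calc S * α⁻¹ᴴ - α⁻¹ * S = α⁻¹ * (α * S - S * αᴴ) * α⁻¹ᴴ := by
        rw [mul_sub, sub_mul, ← Matrix.mul_assoc, nonsing_inv_mul _ hα', Matrix.one_mul,
          Matrix.mul_assoc, Matrix.mul_assoc, hH, Matrix.mul_one]
    _ = Complex.I • (α⁻¹ * T * α⁻¹ᴴ) := by rw [h, mul_smul_comm, smul_mul_assoc]

lemma evolutionStep_eq (hα : IsUnit α)
    (h : α * S - S * αᴴ = Complex.I • (θa * θaᴴ + θb * θbᴴ)) :
    evolutionStep α S θa θb = (1 - Complex.I • α⁻¹) * S * (1 - Complex.I • α⁻¹)ᴴ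
      + (2 : ℂ) • (α⁻¹ * θa * (α⁻¹ * θa)ᴴ) := by
  have hrel := mul_conjTranspose_inv_sub_inv_mul hα h
  simp only [evolutionStep, conjTranspose_sub, conjTranspose_smul, conjTranspose_one,
    conjTranspose_mul, Complex.star_def, Complex.conj_I, Matrix.mul_add, Matrix.add_mul,
    Matrix.mul_sub, Matrix.sub_mul, Matrix.smul_mul, Matrix.mul_smul, Matrix.mul_assoc,
    Matrix.one_mul, Matrix.mul_one] at hrel ⊢
  linear_combination (norm := match_scalars <;> norm_num) (-Complex.I) • hrel

lemma mul_evolutionStep_sub_evolutionStep_mul (hα : IsUnit α)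
    (h : α * S - S * αᴴ = Complex.I • (θa * θaᴴ + θb * θbᴴ)) :
    α * evolutionStep α S θa θb - evolutionStep α S θa θb * αᴴ
      = Complex.I • ((1 + Complex.I • α⁻¹) * θa * ((1 + Complex.I • α⁻¹) * θa)ᴴ
        + (1 - Complex.I • α⁻¹) * θb * ((1 - Complex.I • α⁻¹) * θb)ᴴ) := by
  have hrel := mul_conjTranspose_inv_sub_inv_mul hα h
  have hα' : IsUnit α.det := (isUnit_iff_isUnit_det α).mp hα
  have hcancel (X : Matrix ι ι ℂ) : α * (α⁻¹ * X) = X := by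
    rw [← Matrix.mul_assoc, mul_nonsing_inv _ hα', Matrix.one_mul]
  have hH : α⁻¹ᴴ * αᴴ = 1 := by rw [← conjTranspose_mul, mul_nonsing_inv _ hα', conjTranspose_one]
  simp only [evolutionStep, conjTranspose_sub, conjTranspose_add, conjTranspose_smul,
    conjTranspose_mul, Complex.star_def, Complex.conj_I, Matrix.mul_add, Matrix.add_mul,
    Matrix.mul_sub, Matrix.sub_mul, Matrix.smul_mul, Matrix.mul_smul, Matrix.mul_assoc,
    Matrix.one_mul, Matrix.mul_one, hcancel, hH, smul_add, smul_sub] at hrel h ⊢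
  linear_combination (norm := match_scalars <;> norm_num) h + hrel

end Evolution

section Controllability

variable {n p : ℕ}

lemma Controllable.eq_zero {α : Matrix (Fin n) (Fin n) ℂ} {θ : Matrix (Fin n) (Fin p) ℂ}
    (hc : Controllable α θ) {v : Fin n → ℂ} {c : ℂ} (hv : αᴴ *ᵥ v = c • v)
    (hθ : θᴴ *ᵥ v = 0) : v = 0 := by
  have hleft : star v ᵥ* α = star c • star v := by
    simpa [star_mulVec] using congrArg star hv
  have hrow (k : ℕ) : star v ᵥ* (α ^ k * θ) = 0 := by
    induction k with
    | zero => simpa [star_mulVec] using congrArg star hθ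
    | succ k ih =>
      rw [pow_succ', Matrix.mul_assoc, ← vecMul_vecMul, hleft, smul_vecMul, ih, smul_zero]
  have hspan : Submodule.span ℂ {w : Fin n → ℂ | ∃ k : ℕ, k < n ∧ ∃ j : Fin p,
      w = fun i => (α ^ k * θ) i j} ≤ LinearMap.ker (dotProductBilin ℂ ℂ (star v)) := by
    rw [Submodule.span_le]
    rintro _ ⟨k, -, j, rfl⟩
    exact congrFun (hrow k) j
  simpa using hspan (hc ▸ Submodule.mem_top : v ∈ _)

lemma Controllable.mul_left {α M : Matrix (Fin n) (Fin n) ℂ} {θ : Matrix (Fin n) (Fin p) ℂ}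
    (hc : Controllable α θ) (hM : IsUnit M) (hαM : Commute α M) : Controllable α (M * θ) := by
  rw [Controllable, eq_top_iff]
  calc ⊤ = Submodule.map M.mulVecLin ⊤ := by
        rw [Submodule.map_top, LinearMap.range_eq_top.mpr (mulVec_surjective_iff_isUnit.mpr hM)]
    _ = Submodule.span ℂ (M.mulVecLin '' {w : Fin n → ℂ | ∃ k : ℕ, k < n ∧ ∃ j : Fin p,
          w = fun i => (α ^ k * θ) i j}) := by rw [← Submodule.map_span, hc]
    _ ≤ _ := by
      refine Submodule.span_mono ?_
      rintro _ ⟨_, ⟨k, hk, j, rfl⟩, rfl⟩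
      refine ⟨k, hk, j, ?_⟩
      change M *ᵥ (α ^ k * θ).col j = (α ^ k * (M * θ)).col j
      rw [← Matrix.mul_assoc, (hαM.pow_left k).eq, Matrix.mul_assoc, ← mulVec_single_one,
        ← mulVec_single_one, mulVec_mulVec]

end Controllability

section Admissibility

variable {n m₁ m₂ : ℕ} {α S : Matrix (Fin n) (Fin n) ℂ}

lemma Admissible.im_pos_of_mem_spectrum {θ₁ : Matrix (Fin n) (Fin m₁) ℂ}
    {θ₂ : Matrix (Fin n) (Fin m₂) ℂ} (h : Admissible α S θ₁ θ₂) (hc : Controllable α θ₁) {z : ℂ}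
    (hz : z ∈ spectrum ℂ α) : 0 < z.im := by
  obtain ⟨v, hv0, hv⟩ := exists_conjTranspose_mulVec_eq_smul_of_mem_spectrum hz
  set q := star v ⬝ᵥ S *ᵥ v
  set p₁ := star (θ₁ᴴ *ᵥ v) ⬝ᵥ θ₁ᴴ *ᵥ v
  set p₂ := star (θ₂ᴴ *ᵥ v) ⬝ᵥ θ₂ᴴ *ᵥ v
  have hq : 0 < q := h.1.dotProduct_mulVec_pos hv0
  have hp₁ : 0 < p₁ := dotProduct_star_self_pos_iff.mpr fun h0 => hv0 (hc.eq_zero hv h0)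
  have hp₂ : 0 ≤ p₂ := dotProduct_star_self_nonneg _
  have hleft : star v ᵥ* α = z • star v := by simpa [star_mulVec] using congrArg star hv
  have key : (2 * z.im : ℂ) * q = p₁ + p₂ := by
    have := congrArg (fun M => star v ⬝ᵥ M *ᵥ v) h.2
    simp only [sub_mulVec, add_mulVec, smul_mulVec, dotProduct_sub, dotProduct_add,
      dotProduct_smul, star_dotProduct_mul_conjTranspose_mulVec] at this
    rw [← mulVec_mulVec, ← mulVec_mulVec, dotProduct_mulVec, hleft, hv, mulVec_smul,
      smul_dotProduct, dotProduct_smul, ← sub_smul, Complex.star_def, Complex.sub_conj,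
      smul_eq_mul, smul_eq_mul] at this
    push_cast at this
    apply mul_left_cancel₀ Complex.I_ne_zero
    linear_combination this
  have h2im : (0 : ℂ) < 2 * z.im :=
    (pos_iff_pos_of_mul_pos (key ▸ add_pos_of_pos_of_nonneg hp₁ hp₂)).mpr hq
  have : (0 : ℝ) < 2 * z.im := by exact_mod_cast h2im
  linarith

theorem Admissible.evolutionStep {θa : Matrix (Fin n) (Fin m₁) ℂ}
    {θb : Matrix (Fin n) (Fin m₂) ℂ} (h : Admissible α S θa θb) (hc : Controllable α θa) :
    Admissible α (evolutionStep α S θa θb)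
      ((1 + Complex.I • α⁻¹) * θa) ((1 - Complex.I • α⁻¹) * θb) := by
  have hα : IsUnit α :=
    isUnit_of_forall_mem_spectrum_im_pos fun _ hz => h.im_pos_of_mem_spectrum hc hz
  refine ⟨?_, mul_evolutionStep_sub_evolutionStep_mul hα h.2⟩
  rw [evolutionStep_eq hα h.2]
  refine h.1.mul_mul_conjTranspose_add_smul _ _ (by norm_num) fun x hCx hBx => ?_
  have hβx : α⁻¹ᴴ *ᵥ x = Complex.I • x := by
    simp only [conjTranspose_sub, conjTranspose_one, conjTranspose_smul, Complex.star_def,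
      Complex.conj_I, sub_mulVec, one_mulVec, smul_mulVec] at hCx
    linear_combination (norm := match_scalars <;> norm_num) (-Complex.I) • hCx
  have hαx : αᴴ *ᵥ x = -Complex.I • x := by
    calc αᴴ *ᵥ x = -Complex.I • (αᴴ * α⁻¹ᴴ) *ᵥ x := by
          rw [← mulVec_mulVec, hβx, mulVec_smul, smul_smul]; norm_num
      _ = -Complex.I • x := by
          rw [← conjTranspose_mul, nonsing_inv_mul _ ((isUnit_iff_isUnit_det α).mp hα),
            conjTranspose_one, one_mulVec]
  refine hc.eq_zero hαx ?_
  rw [conjTranspose_mul, ← mulVec_mulVec, hβx, mulVec_smul, smul_eq_zero] at hBx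
  exact hBx.resolve_left Complex.I_ne_zero

end Admissibility

lemma fromCols_mul_sigJ_mul_conjTranspose {n m₁ m₂ : ℕ} (A : Matrix (Fin n) (Fin m₁) ℂ)
    (B : Matrix (Fin n) (Fin m₂) ℂ) :
    fromCols A B * sigJ m₁ m₂ * (fromCols A B)ᴴ = A * Aᴴ - B * Bᴴ := by
  rw [sigJ, fromCols_mul_fromBlocks, conjTranspose_fromCols_eq_fromRows_conjTranspose,
    fromCols_mul_fromRows]
  simp [sub_eq_add_neg]

/-- for a strongly admissible quadruple, `σ(α) ⊂ ℂ₊`, every `S_k` is positive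
definite (so every `Σ_k` is admissible) and every pair `(α, (I + iα⁻¹)^kϑ₁)` is controllable. -/
theorem strongly_admissible_discrete_evolution
    {n m₁ m₂ : ℕ} (α S₀ : Matrix (Fin n) (Fin n) ℂ)
    (θ₁ : Matrix (Fin n) (Fin m₁) ℂ) (θ₂ : Matrix (Fin n) (Fin m₂) ℂ)
    (hadm : Admissible α S₀ θ₁ θ₂) (hctrl : Controllable α θ₁)
    (Λ : ℕ → Matrix (Fin n) (Fin m₁ ⊕ Fin m₂) ℂ)
    (hΛ : ∀ k : ℕ, Λ k = Matrix.fromCols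
      ((1 + Complex.I • α⁻¹) ^ k * θ₁) ((1 - Complex.I • α⁻¹) ^ k * θ₂))
    (S : ℕ → Matrix (Fin n) (Fin n) ℂ)
    (hS0 : S 0 = S₀)
    (hS : ∀ k : ℕ, S (k + 1) =
      S k + α⁻¹ * S k * (α⁻¹)ᴴ + α⁻¹ * (Λ k * sigJ m₁ m₂ * (Λ k)ᴴ) * (α⁻¹)ᴴ) :
    (∀ z ∈ spectrum ℂ α, 0 < z.im) ∧ IsUnit α ∧
    (∀ k : ℕ, (S k).PosDef ∧
      Admissible α (S k) ((1 + Complex.I • α⁻¹) ^ k * θ₁) ((1 - Complex.I • α⁻¹) ^ k * θ₂)) ∧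
    (∀ k : ℕ, Controllable α ((1 + Complex.I • α⁻¹) ^ k * θ₁)) := by
  have him : ∀ z ∈ spectrum ℂ α, 0 < z.im := fun _ hz => hadm.im_pos_of_mem_spectrum hctrl hz
  have hα : IsUnit α := isUnit_of_forall_mem_spectrum_im_pos him
  have hdet : IsUnit α.det := (isUnit_iff_isUnit_det α).mp hα
  have hcomm : Commute α (1 + Complex.I • α⁻¹) := (Commute.one_right α).add_right
    (Commute.smul_right ((mul_nonsing_inv _ hdet).trans (nonsing_inv_mul _ hdet).symm) _)
  have hctrlk (k : ℕ) : Controllable α ((1 + Complex.I • α⁻¹) ^ k * θ₁) :=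
    hctrl.mul_left ((isUnit_one_add_I_smul_inv him).pow k) (hcomm.pow_right k)
  have hadmk (k : ℕ) :
      Admissible α (S k) ((1 + Complex.I • α⁻¹) ^ k * θ₁) ((1 - Complex.I • α⁻¹) ^ k * θ₂) := by
    induction k with
    | zero => simpa [hS0] using hadm
    | succ k ih =>
      rw [hS, hΛ, fromCols_mul_sigJ_mul_conjTranspose]
      simpa only [evolutionStep, pow_succ', Matrix.mul_assoc] using ih.evolutionStep (hctrlk k)
  exact ⟨him, hα, fun k => ⟨(hadmk k).1, hadmk k⟩, hctrlk⟩
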